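/- Main Theorem (syntactic cut-elimination for the one-variable modal μ-calculus): For every sequent Γ of L0, if Γ is derivable in the finitary system M (which includes the cut rule and the induction rule), then Γ is derivable in the cut-free infinitary system K_ω. -/

import Mathlib

namespace OneVarMu

/-- Operator forms of the language `L_Ω` (one fixed variable `X`, written `var`).
`nut` is the auxiliary fixed-point connective `ν̃`; `L0` operator forms are the
`nut`-free ones. -/
inductive Form : Type
  | atom  : ℕ → Form          -- p_i
  | natom : ℕ → Form          -- p̄_i
  | var   : Form              -- X
  | and   : Form → Form → Form
  | or    : Form → Form → Form
  | box   : Form → Form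
  | dia   : Form → Form
  | mu    : Form → Form       -- μX.A
  | nu    : Form → Form       -- νX.A
  | nut   : Form → Form       -- ν̃X.A
  deriving DecidableEq

namespace Form

/-- Negation `¬A` (on `ν̃` we extend the `L0` definition as for `ν`). -/
def compl : Form → Form
  | atom i  => natom i
  | natom i => atom i
  | var     => var
  | and A B => or (compl A) (compl B)
  | or A B  => and (compl A) (compl B)
  | box A   => dia (compl A)
  | dia A   => box (compl A)
  | mu A    => nu (compl A)
  | nu A    => mu (compl A)
  | nut A   => mu (compl A)

/-- `subst A B` is `A(B)`: substitute `B` for every free occurrence of `X` in `A`. -/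
def subst : Form → Form → Form
  | atom i, _  => atom i
  | natom i, _ => natom i
  | var, B     => B
  | and A1 A2, B => and (subst A1 B) (subst A2 B)
  | or A1 A2, B  => or (subst A1 B) (subst A2 B)
  | box A, B   => box (subst A B)
  | dia A, B   => dia (subst A B)
  | mu A, _    => mu A
  | nu A, _    => nu A
  | nut A, _   => nut A

/-- The level of an operator form: maximal nesting of fixed-point operators. -/
def lev : Form → ℕ
  | atom _  => 0
  | natom _ => 0
  | var     => 0
  | and A B => max (lev A) (lev B)
  | or A B  => max (lev A) (lev B)
  | box A   => lev A
  | dia A   => lev A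
  | mu A    => lev A + 1
  | nu A    => lev A + 1
  | nut A   => lev A + 1

/-- `A'`: replace every occurrence of `νX` by `ν̃X`. -/
def prime : Form → Form
  | atom i  => atom i
  | natom i => natom i
  | var     => var
  | and A B => and (prime A) (prime B)
  | or A B  => or (prime A) (prime B)
  | box A   => box (prime A)
  | dia A   => dia (prime A)
  | mu A    => mu (prime A)
  | nu A    => nut (prime A)
  | nut A   => nut (prime A)

/-- `A` is an operator form of `L0`, i.e. contains no `ν̃`. -/
def IsL0 : Form → Prop
  | and A B => IsL0 A ∧ IsL0 B
  | or A B  => IsL0 A ∧ IsL0 B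
  | box A   => IsL0 A
  | dia A   => IsL0 A
  | mu A    => IsL0 A
  | nu A    => IsL0 A
  | nut _   => False
  | _       => True

/-- `A` has no free occurrence of the variable `X`, i.e. `A` is a formula. -/
def ClosedF : Form → Prop
  | var     => False
  | and A B => ClosedF A ∧ ClosedF B
  | or A B  => ClosedF A ∧ ClosedF B
  | box A   => ClosedF A
  | dia A   => ClosedF A
  | _       => True

/-- `⊤ := p ∨ p̄` for a fixed atomic proposition. -/
def top : Form := or (atom 0) (natom 0)

/-- Finite iterations `A^i(⊤)`. -/
def iter (A : Form) : ℕ → Form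
  | 0     => top
  | n + 1 => subst A (iter A n)

/-- `OccursIn A B`: the operator form `A` occurs (as a subterm) in `B`. -/
def OccursIn (A : Form) : Form → Prop
  | atom i  => A = atom i
  | natom i => A = natom i
  | var     => A = var
  | and C D => A = and C D ∨ OccursIn A C ∨ OccursIn A D
  | or C D  => A = or C D ∨ OccursIn A C ∨ OccursIn A D
  | box C   => A = box C ∨ OccursIn A C
  | dia C   => A = dia C ∨ OccursIn A C
  | mu C    => A = mu C ∨ OccursIn A C
  | nu C    => A = nu C ∨ OccursIn A C
  | nut C   => A = nut C ∨ OccursIn A C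

/-- `replace t r A`: simultaneously replace every occurrence of `t` in `A` by `r`. -/
def replace (t r : Form) : Form → Form
  | and A B => if and A B = t then r else and (replace t r A) (replace t r B)
  | or A B  => if or A B = t then r else or (replace t r A) (replace t r B)
  | box A   => if box A = t then r else box (replace t r A)
  | dia A   => if dia A = t then r else dia (replace t r A)
  | mu A    => if mu A = t then r else mu (replace t r A)
  | nu A    => if nu A = t then r else nu (replace t r A)
  | nut A   => if nut A = t then r else nut (replace t r A)
  | A       => if A = t then r else A

end Form

/-- Sequents are finite sets of formulae. -/
abbrev Sequent := Finset Form

/-- Every member is a formula (no free `X`): a sequent of `L_Ω`. -/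
def ClosedSeq (Γ : Sequent) : Prop := ∀ C ∈ Γ, C.ClosedF

/-- A sequent of `L0`: every member is a `ν̃`-free formula. -/
def L0Seq (Γ : Sequent) : Prop := ∀ C ∈ Γ, C.IsL0 ∧ C.ClosedF

/-- `Γ` is `h`-positive: every `ν̃X.A` occurring in it has level `< h`. -/
def Positive (h : ℕ) (Γ : Sequent) : Prop :=
  ∀ C ∈ Γ, ∀ B : Form, Form.OccursIn (Form.nut B) C → Form.lev (Form.nut B) < h

/-- Every formula of the sequent has level `≤ k`. -/
def SeqLevLE (k : ℕ) (Γ : Sequent) : Prop := ∀ C ∈ Γ, C.lev ≤ k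

/-- The infinitary cut-free system `K_ω`. -/
inductive KDer : Sequent → Prop
  | ax (Γ : Sequent) (i : ℕ) :
      KDer (insert (Form.atom i) (insert (Form.natom i) Γ))
  | orR (Γ : Sequent) (A B : Form) :
      KDer (insert A (insert B Γ)) → KDer (insert (Form.or A B) Γ)
  | andR (Γ : Sequent) (A B : Form) :
      KDer (insert A Γ) → KDer (insert B Γ) → KDer (insert (Form.and A B) Γ)
  | boxR (Γ S : Sequent) (A : Form) :
      KDer (insert A Γ) → KDer (Γ.image Form.dia ∪ insert (Form.box A) S)
  | clo (Γ : Sequent) (A : Form) :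
      KDer (insert (Form.subst A (Form.mu A)) Γ) → KDer (insert (Form.mu A) Γ)
  | nuR (Γ : Sequent) (A : Form) :
      (∀ i : ℕ, KDer (insert (Form.iter A i) Γ)) → KDer (insert (Form.nu A) Γ)

/-- The finitary system `M` (with induction rule and cut). -/
inductive MDer : Sequent → Prop
  | ax (Γ : Sequent) (i : ℕ) :
      MDer (insert (Form.atom i) (insert (Form.natom i) Γ))
  | axMu (Γ : Sequent) (A : Form) :
      MDer (insert (Form.mu A) (insert (Form.compl (Form.mu A)) Γ))
  | orR (Γ : Sequent) (A B : Form) :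
      MDer (insert A (insert B Γ)) → MDer (insert (Form.or A B) Γ)
  | andR (Γ : Sequent) (A B : Form) :
      MDer (insert A Γ) → MDer (insert B Γ) → MDer (insert (Form.and A B) Γ)
  | boxR (Γ S : Sequent) (A : Form) :
      MDer (insert A Γ) → MDer (Γ.image Form.dia ∪ insert (Form.box A) S)
  | clo (Γ : Sequent) (A : Form) :
      MDer (insert (Form.subst A (Form.mu A)) Γ) → MDer (insert (Form.mu A) Γ)
  | ind (A B : Form) :
      MDer (insert (Form.compl (Form.subst A B)) {B}) →
      MDer (insert (Form.compl (Form.mu A)) {B})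
  | cut (Γ : Sequent) (A : Form) :
      A.IsL0 → A.ClosedF →
      MDer (insert A Γ) → MDer (insert (Form.compl A) Γ) → MDer Γ

/-- The finitary system `M`, with the extra recording that every sequent occurring
in the proof (i.e. the conclusion of every subderivation) has level `≤ k`. -/
inductive MDerB (k : ℕ) : Sequent → Prop
  | ax (Γ : Sequent) (i : ℕ) :
      SeqLevLE k (insert (Form.atom i) (insert (Form.natom i) Γ)) →
      MDerB k (insert (Form.atom i) (insert (Form.natom i) Γ))
  | axMu (Γ : Sequent) (A : Form) :
      SeqLevLE k (insert (Form.mu A) (insert (Form.compl (Form.mu A)) Γ)) →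
      MDerB k (insert (Form.mu A) (insert (Form.compl (Form.mu A)) Γ))
  | orR (Γ : Sequent) (A B : Form) :
      SeqLevLE k (insert (Form.or A B) Γ) →
      MDerB k (insert A (insert B Γ)) → MDerB k (insert (Form.or A B) Γ)
  | andR (Γ : Sequent) (A B : Form) :
      SeqLevLE k (insert (Form.and A B) Γ) →
      MDerB k (insert A Γ) → MDerB k (insert B Γ) → MDerB k (insert (Form.and A B) Γ)
  | boxR (Γ S : Sequent) (A : Form) :
      SeqLevLE k (Γ.image Form.dia ∪ insert (Form.box A) S) →
      MDerB k (insert A Γ) → MDerB k (Γ.image Form.dia ∪ insert (Form.box A) S)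
  | clo (Γ : Sequent) (A : Form) :
      SeqLevLE k (insert (Form.mu A) Γ) →
      MDerB k (insert (Form.subst A (Form.mu A)) Γ) → MDerB k (insert (Form.mu A) Γ)
  | ind (A B : Form) :
      SeqLevLE k (insert (Form.compl (Form.mu A)) {B}) →
      MDerB k (insert (Form.compl (Form.subst A B)) {B}) →
      MDerB k (insert (Form.compl (Form.mu A)) {B})
  | cut (Γ : Sequent) (A : Form) :
      A.IsL0 → A.ClosedF → SeqLevLE k Γ →
      MDerB k (insert A Γ) → MDerB k (insert (Form.compl A) Γ) → MDerB k Γ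

/-- Derivations of the system `M^Ω_k`, relative to a predicate `prev` expressing
cut-free derivability in `M^Ω_{k-1}`.  The boolean index is `true` if instances
of cut are allowed and `false` for cut-free derivations. -/
inductive OmDerAux (prev : Sequent → Prop) (k : ℕ) : Bool → Sequent → Prop
  | ax (c : Bool) (Γ : Sequent) (i : ℕ) :
      OmDerAux prev k c (insert (Form.atom i) (insert (Form.natom i) Γ))
  | orR (c : Bool) (Γ : Sequent) (A B : Form) :
      OmDerAux prev k c (insert A (insert B Γ)) →
      OmDerAux prev k c (insert (Form.or A B) Γ)
  | andR (c : Bool) (Γ : Sequent) (A B : Form) :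
      OmDerAux prev k c (insert A Γ) → OmDerAux prev k c (insert B Γ) →
      OmDerAux prev k c (insert (Form.and A B) Γ)
  | boxR (c : Bool) (Γ S : Sequent) (A : Form) :
      OmDerAux prev k c (insert A Γ) →
      OmDerAux prev k c (Γ.image Form.dia ∪ insert (Form.box A) S)
  | clo (c : Bool) (Γ : Sequent) (A : Form) :
      OmDerAux prev k c (insert (Form.subst A (Form.mu A)) Γ) →
      OmDerAux prev k c (insert (Form.mu A) Γ)
  | nuR (c : Bool) (Γ : Sequent) (A : Form) :
      (∀ i : ℕ, OmDerAux prev k c (insert (Form.iter A i) Γ)) →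
      OmDerAux prev k c (insert (Form.nu A) Γ)
  | cut (Γ : Sequent) (A : Form) :
      A.IsL0 → A.ClosedF → A.lev ≤ k →
      OmDerAux prev k true (insert (Form.prime A) Γ) →
      OmDerAux prev k true (insert (Form.prime (Form.compl A)) Γ) →
      OmDerAux prev k true Γ
  | omega (c : Bool) (Γ : Sequent) (A : Form) (h : ℕ) :
      1 ≤ h → h ≤ k → A.IsL0 →
      Form.lev (Form.prime (Form.compl (Form.mu A))) = h →
      (∀ Δ : Sequent, ClosedSeq Δ → Positive h Δ →
        prev (insert (Form.prime (Form.mu A)) Δ) → OmDerAux prev k c (Δ ∪ Γ)) →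
      OmDerAux prev k c (insert (Form.prime (Form.compl (Form.mu A))) Γ)
  | omegaT (c : Bool) (Γ : Sequent) (A : Form) (h : ℕ) :
      1 ≤ h → h ≤ k → A.IsL0 →
      Form.lev (Form.prime (Form.compl (Form.mu A))) = h →
      OmDerAux prev k c (insert (Form.prime (Form.mu A)) Γ) →
      (∀ Δ : Sequent, ClosedSeq Δ → Positive h Δ →
        prev (insert (Form.prime (Form.mu A)) Δ) → OmDerAux prev k c (Δ ∪ Γ)) →
      OmDerAux prev k c Γ

/-- `OmProv k c Γ`: the sequent `Γ` is derivable in `M^Ω_k`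
(cut-free when `c = false`). -/
def OmProv : ℕ → Bool → Sequent → Prop
  | 0     => OmDerAux (fun _ => False) 0
  | k + 1 => OmDerAux (fun Δ => OmProv k false Δ) (k + 1)

/-!
Cut elimination is proved semantically: `M` is sound and `K_ω` is complete for Kripke semantics,
with `μ` and `ν` read as least and greatest fixed points.

For completeness, a sequent that `K_ω` does not derive extends to a finite saturated sequent that
is still underivable. Saturation terminates because the ω-rule replaces `νX.A` by an approximant
`A^i(⊤)` of strictly smaller level, while every other rule stays inside a finite closure of the
sequent. These sequents are the worlds of a canonical model in which every formula of a world is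
false at it: for `μX.A` because the worlds avoiding `μX.A` form a prefixed point of `A`, for
`νX.A` because `νX.A` implies each of its approximants.
-/

namespace Form

lemma subst_of_closedF {A : Form} (hA : A.ClosedF) (B : Form) : A.subst B = A := by
  induction A <;> simp_all [subst, ClosedF]

lemma closedF_subst (A : Form) {B : Form} (hB : B.ClosedF) : (A.subst B).ClosedF := by
  induction A <;> simp_all [subst, ClosedF]

lemma closedF_compl {A : Form} (hA : A.ClosedF) : A.compl.ClosedF := by
  induction A <;> simp_all [compl, ClosedF]

lemma lev_subst_le (A B : Form) : (A.subst B).lev ≤ max A.lev B.lev := by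
  induction A <;> simp_all [subst, lev] <;> omega

lemma lev_iter_le (A : Form) (i : ℕ) : (A.iter i).lev ≤ A.lev := by
  induction i with
  | zero => simp [iter, top, lev]
  | succ n ih => exact (lev_subst_le A _).trans (max_le le_rfl ih)

def subformulas : Form → Finset Form
  | atom i  => {atom i}
  | natom i => {natom i}
  | var     => {var}
  | and A B => insert (and A B) (subformulas A ∪ subformulas B)
  | or A B  => insert (or A B) (subformulas A ∪ subformulas B)
  | box A   => insert (box A) (subformulas A)
  | dia A   => insert (dia A) (subformulas A)
  | mu A    => insert (mu A) (subformulas A)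
  | nu A    => insert (nu A) (subformulas A)
  | nut A   => insert (nut A) (subformulas A)

lemma mem_subformulas_self (A : Form) : A ∈ A.subformulas := by
  cases A <;> simp [subformulas]

lemma subformulas_subset_of_mem {A B : Form} (h : A ∈ B.subformulas) :
    A.subformulas ⊆ B.subformulas := by
  induction B <;>
    simp only [subformulas, Finset.mem_insert, Finset.mem_union, Finset.mem_singleton] at h <;>
    grind [subformulas, Finset.subset_insert, Finset.subset_union_left, Finset.subset_union_right]

lemma lev_le_of_mem_subformulas {A B : Form} (h : A ∈ B.subformulas) : A.lev ≤ B.lev := by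
  induction B <;>
    simp only [subformulas, Finset.mem_insert, Finset.mem_union, Finset.mem_singleton] at h <;>
    grind [lev]

/-- The formulas that the backward rules of `K_ω` put in place of a principal formula `C`. -/
def components : Form → Set Form
  | or A B => {A, B}
  | and A B => {A, B}
  | mu A => {A.subst (mu A)}
  | nu A => Set.range A.iter
  | atom _ | natom _ | var | box _ | dia _ | nut _ => ∅

end Form

open Form

def subformulaClosure (X : Sequent) : Sequent := X.biUnion subformulas

/-- A finite set of formulas that is closed under `μX.A ↦ A(μX.A)`, see
`components_subset_flClosure`. -/
def flClosure (X : Sequent) : Sequent :=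
  subformulaClosure X ∪ (subformulaClosure X ×ˢ subformulaClosure X).image fun p => p.1.subst p.2

lemma mem_subformulaClosure_of_mem_subformulas {X : Sequent} {A B : Form}
    (hB : B ∈ subformulaClosure X) (hA : A ∈ B.subformulas) : A ∈ subformulaClosure X := by
  obtain ⟨C, hC, hBC⟩ := Finset.mem_biUnion.1 hB
  exact Finset.mem_biUnion.2 ⟨C, hC, subformulas_subset_of_mem hBC hA⟩

lemma subset_flClosure (X : Sequent) : X ⊆ flClosure X :=
  fun C hC => Finset.mem_union_left _ (Finset.mem_biUnion.2 ⟨C, hC, mem_subformulas_self C⟩)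

lemma subst_mem_flClosure {X : Sequent} {A B : Form} (hA : A ∈ subformulaClosure X)
    (hB : B ∈ subformulaClosure X) : A.subst B ∈ flClosure X :=
  Finset.mem_union_right _ (Finset.mem_image.2 ⟨(A, B), Finset.mem_product.2 ⟨hA, hB⟩, rfl⟩)

lemma lev_le_of_mem_flClosure {X : Sequent} {L : ℕ} (hX : ∀ D ∈ X, D.lev ≤ L) {C : Form}
    (hC : C ∈ flClosure X) : C.lev ≤ L := by
  have hsub : ∀ C ∈ subformulaClosure X, C.lev ≤ L := fun C hC => by
    obtain ⟨D, hD, hCD⟩ := Finset.mem_biUnion.1 hC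
    exact (lev_le_of_mem_subformulas hCD).trans (hX D hD)
  simp only [flClosure, Finset.mem_union, Finset.mem_image, Finset.mem_product] at hC
  rcases hC with hC | ⟨⟨A, B⟩, ⟨hA, hB⟩, rfl⟩
  · exact hsub C hC
  · exact (lev_subst_le A B).trans (max_le (hsub A hA) (hsub B hB))

lemma components_subset_of_mem_subformulaClosure {X : Sequent} {C : Form}
    (hC : C ∈ subformulaClosure X) (hnu : ∀ A, C ≠ nu A) : C.components ⊆ flClosure X := by
  have hmem : ∀ {A}, A ∈ C.subformulas → A ∈ subformulaClosure X :=
    mem_subformulaClosure_of_mem_subformulas hC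
  cases C with
  | or A B | and A B =>
    simp only [components, Set.insert_subset_iff, Set.singleton_subset_iff, Finset.mem_coe]
    exact ⟨Finset.mem_union_left _ (hmem (by simp [subformulas, mem_subformulas_self])),
      Finset.mem_union_left _ (hmem (by simp [subformulas, mem_subformulas_self]))⟩
  | mu A =>
    simpa [components] using
      subst_mem_flClosure (hmem (by simp [subformulas, mem_subformulas_self])) hC
  | nu A => exact absurd rfl (hnu A)
  | atom _ | natom _ | var | box _ | dia _ | nut _ => simp [components]

lemma components_subset_flClosure {X : Sequent} {C : Form} (hC : C ∈ flClosure X)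
    (hnu : ∀ A, C ≠ nu A) : C.components ⊆ flClosure X := by
  simp only [flClosure, Finset.mem_union, Finset.mem_image, Finset.mem_product] at hC
  rcases hC with hC | ⟨⟨A, B⟩, ⟨hA, hB⟩, rfl⟩
  · exact components_subset_of_mem_subformulaClosure hC hnu
  have hmem : ∀ {A'}, A' ∈ A.subformulas → A'.subst B ∈ flClosure X := fun hA' =>
    subst_mem_flClosure (mem_subformulaClosure_of_mem_subformulas hA hA') hB
  cases A with
  | var => exact components_subset_of_mem_subformulaClosure hB hnu
  | or A₁ A₂ | and A₁ A₂ =>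
    simp only [subst, components, Set.insert_subset_iff, Set.singleton_subset_iff, Finset.mem_coe]
    exact ⟨hmem (by simp [subformulas, mem_subformulas_self]),
      hmem (by simp [subformulas, mem_subformulas_self])⟩
  | mu A' => exact components_subset_of_mem_subformulaClosure hA hnu
  | nu A' => exact absurd rfl (hnu A')
  | atom _ | natom _ | box _ | dia _ | nut _ => simp [subst, components]

def Resolved (Δ : Sequent) : Form → Prop
  | .or A B => A ∈ Δ ∧ B ∈ Δ
  | .and A B => A ∈ Δ ∨ B ∈ Δ
  | .mu A => A.subst (.mu A) ∈ Δ
  | .nu A => ∃ i, A.iter i ∈ Δ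
  | .atom _ | .natom _ | .var | .box _ | .dia _ | .nut _ => True

lemma Resolved.mono {Δ Δ' : Sequent} (h : Δ ⊆ Δ') {C : Form} (hC : Resolved Δ C) :
    Resolved Δ' C := by
  cases C <;> simp only [Resolved] at hC ⊢ <;> grind

def Saturated (Δ : Sequent) : Prop := ∀ C ∈ Δ, Resolved Δ C

lemma KDer.of_insert_mem {Δ : Sequent} {C : Form} (hC : C ∈ Δ) (h : KDer (insert C Δ)) :
    KDer Δ := by
  rwa [Finset.insert_eq_of_mem hC] at h

lemma exists_resolving_superset {Δ : Sequent} (hnd : ¬KDer Δ) {C : Form} (hC : C ∈ Δ) :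
    ∃ Δ', Δ ⊆ Δ' ∧ (∀ E ∈ Δ', E ∈ Δ ∨ E ∈ C.components) ∧ ¬KDer Δ' ∧ Resolved Δ' C := by
  cases C with
  | or A B =>
    refine ⟨insert A (insert B Δ), fun E hE => by simp [hE], fun E hE => ?_,
      fun h => hnd (.of_insert_mem hC (.orR Δ A B h)), by simp [Resolved]⟩
    simp only [Finset.mem_insert] at hE
    simp only [components]
    tauto
  | and A B =>
    have : ¬KDer (insert A Δ) ∨ ¬KDer (insert B Δ) := by
      by_contra! h
      exact hnd (.of_insert_mem hC (.andR Δ A B h.1 h.2))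
    rcases this with h | h
    · exact ⟨insert A Δ, Finset.subset_insert _ _, by simp +contextual [components], h,
        by simp [Resolved]⟩
    · exact ⟨insert B Δ, Finset.subset_insert _ _, by simp +contextual [components], h,
        by simp [Resolved]⟩
  | mu A =>
    exact ⟨insert (A.subst (mu A)) Δ, Finset.subset_insert _ _, by simp +contextual [components],
      fun h => hnd (.of_insert_mem hC (.clo Δ A h)), by simp [Resolved]⟩
  | nu A =>
    obtain ⟨i, hi⟩ : ∃ i, ¬KDer (insert (A.iter i) Δ) := by
      by_contra! h
      exact hnd (.of_insert_mem hC (.nuR Δ A h))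
    exact ⟨insert (A.iter i) Δ, Finset.subset_insert _ _, by simp +contextual [components], hi,
      ⟨i, by simp⟩⟩
  | atom _ | natom _ | var | box _ | dia _ | nut _ =>
    exact ⟨Δ, subset_rfl, fun E hE => .inl hE, hnd, by simp [Resolved]⟩

lemma exists_resolving_all_superset {Δ : Sequent} (hnd : ¬KDer Δ) {N : Finset Form}
    (hN : N ⊆ Δ) : ∃ Δ', Δ ⊆ Δ' ∧ (∀ E ∈ Δ', E ∈ Δ ∨ ∃ C ∈ N, E ∈ C.components) ∧
      ¬KDer Δ' ∧ ∀ C ∈ N, Resolved Δ' C := by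
  induction N using Finset.induction_on with
  | empty => exact ⟨Δ, subset_rfl, fun E hE => .inl hE, hnd, by simp⟩
  | insert C N _ ih =>
    obtain ⟨Δ₁, hΔΔ₁, hΔ₁, hnd₁, hres₁⟩ := ih ((Finset.subset_insert _ _).trans hN)
    obtain ⟨Δ₂, hΔ₁Δ₂, hΔ₂, hnd₂, hres₂⟩ :=
      exists_resolving_superset hnd₁ (hΔΔ₁ (hN (Finset.mem_insert_self C N)))
    refine ⟨Δ₂, hΔΔ₁.trans hΔ₁Δ₂, fun E hE => ?_, hnd₂, ?_⟩
    · rcases hΔ₂ E hE with hE | hE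
      · rcases hΔ₁ E hE with hE | ⟨C', hC', hE⟩
        · exact .inl hE
        · exact .inr ⟨C', Finset.mem_insert_of_mem hC', hE⟩
      · exact .inr ⟨C, Finset.mem_insert_self C N, hE⟩
    · simpa [hres₂] using fun C' hC' => (hres₁ C' hC').mono hΔ₁Δ₂

lemma exists_superset_resolving_all_but_nu {U Δ : Sequent} (hΔU : Δ ⊆ U) (hnd : ¬KDer Δ)
    (hU : ∀ C ∈ U, Resolved Δ C ∨ (∃ A, C = .nu A) ∨ C.components ⊆ U) :
    ∃ Δ', Δ ⊆ Δ' ∧ Δ' ⊆ U ∧ ¬KDer Δ' ∧ ∀ C ∈ Δ', ¬Resolved Δ' C → ∃ A, C = .nu A := by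
  induction hn : (U \ Δ).card using Nat.strong_induction_on generalizing Δ with
  | _ n ih =>
  by_cases hdone : ∀ C ∈ Δ, ¬Resolved Δ C → ∃ A, C = .nu A
  · exact ⟨Δ, subset_rfl, hΔU, hnd, hdone⟩
  push Not at hdone
  obtain ⟨C, hC, hunres, hnu⟩ := hdone
  obtain ⟨Δ₁, hΔΔ₁, hΔ₁, hnd₁, hres₁⟩ := exists_resolving_superset hnd hC
  have hcomp : C.components ⊆ U := by
    rcases hU C (hΔU hC) with h | ⟨A, rfl⟩ | h
    exacts [absurd h hunres, absurd rfl (hnu A), h]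
  have hΔ₁U : Δ₁ ⊆ U := fun E hE => by
    rcases hΔ₁ E hE with hE | hE
    exacts [hΔU hE, hcomp hE]
  have hlt : (U \ Δ₁).card < n := by
    have hss : Δ ⊂ Δ₁ := Finset.ssubset_iff_subset_ne.2
      ⟨hΔΔ₁, by rintro rfl; exact hunres hres₁⟩
    have := Finset.card_lt_card hss
    have := Finset.card_le_card hΔ₁U
    rw [← hn, Finset.card_sdiff_of_subset hΔ₁U, Finset.card_sdiff_of_subset hΔU]
    omega
  obtain ⟨Δ', hΔ₁Δ', hΔ'U, hnd', hΔ'⟩ := ih _ hlt hΔ₁U hnd₁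
    (fun E hE => (hU E hE).imp_left (·.mono hΔΔ₁)) rfl
  exact ⟨Δ', hΔΔ₁.trans hΔ₁Δ', hΔ'U, hnd', hΔ'⟩

lemma resolved_or_components_subset_flClosure_union {X Δ : Sequent}
    (hX : ∀ C ∈ Δ, ¬Resolved Δ C → C ∈ X) :
    ∀ C ∈ flClosure X ∪ Δ, Resolved Δ C ∨ (∃ A, C = .nu A) ∨ C.components ⊆ ↑(flClosure X ∪ Δ) := by
  intro C hC
  by_cases hres : Resolved Δ C
  · exact .inl hres
  have hCX : C ∈ flClosure X :=
    (Finset.mem_union.1 hC).elim id fun hC => subset_flClosure X (hX C hC hres)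
  by_cases hnu : ∃ A, C = .nu A
  · exact .inr (.inl hnu)
  · push Not at hnu
    exact .inr (.inr ((components_subset_flClosure hCX hnu).trans
      (Finset.coe_subset.2 Finset.subset_union_left)))

lemma exists_superset_unresolved_lev_lt {Δ : Sequent} {L : ℕ} (hnd : ¬KDer Δ)
    (hL : ∀ C ∈ Δ, ¬Resolved Δ C → C.lev ≤ L) :
    ∃ Δ', Δ ⊆ Δ' ∧ ¬KDer Δ' ∧ ∀ C ∈ Δ', ¬Resolved Δ' C → C.lev < L := by
  classical
  set X := Δ.filter (¬Resolved Δ ·)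
  have hX : ∀ C ∈ Δ, ¬Resolved Δ C → C ∈ X := fun C hC hunres => Finset.mem_filter.2 ⟨hC, hunres⟩
  obtain ⟨Δ₁, hΔΔ₁, hΔ₁U, hnd₁, hnu₁⟩ := exists_superset_resolving_all_but_nu
    Finset.subset_union_right hnd (resolved_or_components_subset_flClosure_union hX)
  have hunres₁ : ∀ C ∈ Δ₁, ¬Resolved Δ₁ C → C ∈ flClosure X := fun C hC hunres => by
    rcases Finset.mem_union.1 (hΔ₁U hC) with hC | hC
    exacts [hC, subset_flClosure X (hX C hC fun hres => hunres (hres.mono hΔΔ₁))]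
  set N := Δ₁.filter (¬Resolved Δ₁ ·)
  obtain ⟨Δ₂, hΔ₁Δ₂, hΔ₂, hnd₂, hresN⟩ :=
    exists_resolving_all_superset hnd₁ (Finset.filter_subset _ Δ₁ : N ⊆ Δ₁)
  refine ⟨Δ₂, hΔΔ₁.trans hΔ₁Δ₂, hnd₂, fun E hE hunres => ?_⟩
  -- what is left unresolved is an approximant `A^i(⊤)` added for some `νX.A` of level `≤ L`
  rcases hΔ₂ E hE with hE | ⟨C, hCN, hEC⟩
  · by_cases hres : Resolved Δ₁ E
    · exact absurd (hres.mono hΔ₁Δ₂) hunres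
    · exact absurd (hresN E (Finset.mem_filter.2 ⟨hE, hres⟩)) hunres
  obtain ⟨hC, hCunres⟩ := Finset.mem_filter.1 hCN
  obtain ⟨A, rfl⟩ := hnu₁ C hC hCunres
  obtain ⟨i, rfl⟩ := hEC
  have hlev : (Form.nu A).lev ≤ L := lev_le_of_mem_flClosure
    (fun D hD => hL D (Finset.mem_filter.1 hD).1 (Finset.mem_filter.1 hD).2)
    (hunres₁ _ hC hCunres)
  have := lev_iter_le A i
  simp only [Form.lev] at hlev
  omega

theorem exists_saturated_superset {Γ : Sequent} (hnd : ¬KDer Γ) :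
    ∃ Δ, Γ ⊆ Δ ∧ Saturated Δ ∧ ¬KDer Δ := by
  suffices h : ∀ L Δ, ¬KDer Δ → (∀ C ∈ Δ, ¬Resolved Δ C → C.lev < L) →
      ∃ Δ', Δ ⊆ Δ' ∧ Saturated Δ' ∧ ¬KDer Δ' from
    h (Γ.sup Form.lev + 1) Γ hnd fun C hC _ => Nat.lt_succ_of_le (Finset.le_sup hC)
  intro L
  induction L with
  | zero =>
    exact fun Δ hnd hL =>
      ⟨Δ, subset_rfl, fun C hC => by_contra fun h => Nat.not_lt_zero _ (hL C hC h), hnd⟩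
  | succ L ih =>
    intro Δ hnd hL
    obtain ⟨Δ₁, hΔΔ₁, hnd₁, hL₁⟩ :=
      exists_superset_unresolved_lev_lt hnd fun C hC h => Nat.le_of_lt_succ (hL C hC h)
    obtain ⟨Δ', hΔ₁Δ', hsat, hnd'⟩ := ih Δ₁ hnd₁ hL₁
    exact ⟨Δ', hΔΔ₁.trans hΔ₁Δ', hsat, hnd'⟩

theorem _root_.OrderHom.gfp_eq_compl_lfp {α : Type*} [CompleteBooleanAlgebra α] {f g : α →o α}
    (h : ∀ a, g a = (f aᶜ)ᶜ) : g.gfp = f.lfpᶜ := by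
  apply le_antisymm
  · refine le_compl_comm.1 (f.lfp_le ?_)
    rw [← compl_compl (f _), ← h, g.map_gfp]
  · refine g.le_gfp ?_
    rw [h, compl_compl, f.map_lfp]

structure KripkeModel where
  W : Type
  R : W → W → Prop
  V : ℕ → Set W

namespace KripkeModel

/-- `M.eval A S` is the truth set of `A` when the variable `X` denotes `S`. -/
def eval (M : KripkeModel) : Form → Set M.W → Set M.W
  | .atom i, _ => M.V i
  | .natom i, _ => (M.V i)ᶜ
  | .var, S => S
  | .and A B, S => eval M A S ∩ eval M B S
  | .or A B, S => eval M A S ∪ eval M B S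
  | .box A, S => {w | ∀ v, M.R w v → v ∈ eval M A S}
  | .dia A, S => {w | ∃ v, M.R w v ∧ v ∈ eval M A S}
  | .mu A, _ => sInf {T | eval M A T ⊆ T}
  | .nu A, _ => sSup {T | T ⊆ eval M A T}
  | .nut A, _ => sSup {T | T ⊆ eval M A T}

section

variable (M : KripkeModel)

lemma eval_mono (A : Form) : Monotone (M.eval A) := by
  induction A with
  | atom | natom | mu | nu | nut => exact fun _ _ _ => subset_rfl
  | var => exact fun _ _ h => h
  | and A B ihA ihB => exact fun _ _ h => Set.inter_subset_inter (ihA h) (ihB h)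
  | or A B ihA ihB => exact fun _ _ h => Set.union_subset_union (ihA h) (ihB h)
  | box A ih => exact fun _ _ h _ hw v hv => ih h (hw v hv)
  | dia A ih => exact fun _ _ h _ ⟨v, hv, hvA⟩ => ⟨v, hv, ih h hvA⟩

def evalHom (A : Form) : Set M.W →o Set M.W := ⟨M.eval A, M.eval_mono A⟩

lemma eval_mu (A : Form) (S : Set M.W) : M.eval (.mu A) S = (M.evalHom A).lfp := rfl

lemma eval_nu (A : Form) (S : Set M.W) : M.eval (.nu A) S = (M.evalHom A).gfp := rfl

lemma eval_eval_mu (A : Form) (S : Set M.W) :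
    M.eval A (M.eval (.mu A) S) = M.eval (.mu A) S :=
  (M.evalHom A).map_lfp

lemma eval_subst (A B : Form) (S : Set M.W) :
    M.eval (A.subst B) S = M.eval A (M.eval B S) := by
  induction A <;> simp_all [Form.subst, eval]

lemma eval_of_closedF {A : Form} (hA : A.ClosedF) (S T : Set M.W) :
    M.eval A S = M.eval A T := by
  induction A <;> simp_all [Form.ClosedF, eval]

lemma eval_compl (A : Form) (S : Set M.W) : M.eval A.compl S = (M.eval A Sᶜ)ᶜ := by
  induction A generalizing S with
  | atom | natom | var => simp [Form.compl, eval]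
  | and A B ihA ihB => simp [Form.compl, eval, ihA, ihB, Set.compl_inter]
  | or A B ihA ihB => simp [Form.compl, eval, ihA, ihB, Set.compl_union]
  | box A ih => ext; simp [Form.compl, eval, ih]
  | dia A ih => ext; simp [Form.compl, eval, ih]
  | mu A ih =>
    rw [Form.compl, eval_nu, eval_mu]
    exact OrderHom.gfp_eq_compl_lfp ih
  | nu A ih | nut A ih =>
    rw [Form.compl, eval_mu]
    exact eq_compl_comm.2 (OrderHom.gfp_eq_compl_lfp (g := M.evalHom A) fun a => by
      simp [evalHom, ih])

lemma eval_top (S : Set M.W) : M.eval Form.top S = Set.univ := by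
  simp [Form.top, eval]

lemma eval_nu_subset_iter (A : Form) (S T : Set M.W) (i : ℕ) :
    M.eval (.nu A) S ⊆ M.eval (A.iter i) T := by
  induction i with
  | zero => simp [Form.iter, eval_top]
  | succ i ih =>
    rw [Form.iter, eval_subst, eval_nu, ← (M.evalHom A).map_gfp]
    exact M.eval_mono A ih

end

def Models (M : KripkeModel) (S : Set M.W) (Γ : Sequent) : Prop :=
  ∀ w, ∃ C ∈ Γ, w ∈ M.eval C S

variable {M : KripkeModel} {S : Set M.W} {Γ : Sequent} {A B : Form}

lemma models_ax (i : ℕ) : M.Models S (insert (.atom i) (insert (.natom i) Γ)) := fun w => by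
  by_cases h : w ∈ M.V i
  · exact ⟨.atom i, by simp, h⟩
  · exact ⟨.natom i, by simp, h⟩

lemma models_axMu : M.Models S (insert (.mu A) (insert (Form.mu A).compl Γ)) := fun w => by
  by_cases h : w ∈ M.eval (.mu A) S
  · exact ⟨.mu A, by simp, h⟩
  · exact ⟨(Form.mu A).compl, by simp, by rw [M.eval_compl]; exact h⟩

lemma Models.orR (h : M.Models S (insert A (insert B Γ))) : M.Models S (insert (.or A B) Γ) := by
  simpa [Models, eval, or_assoc] using h

lemma Models.andR (hA : M.Models S (insert A Γ)) (hB : M.Models S (insert B Γ)) :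
    M.Models S (insert (.and A B) Γ) := fun w => by
  have := hA w
  have := hB w
  simp_all [eval]
  tauto

lemma Models.boxR {Θ : Sequent} (h : M.Models S (insert A Γ)) :
    M.Models S (Γ.image .dia ∪ insert (.box A) Θ) := fun w => by
  by_cases hdia : ∃ B ∈ Γ, w ∈ M.eval (.dia B) S
  · obtain ⟨B, hB, hw⟩ := hdia
    exact ⟨.dia B, Finset.mem_union_left _ (Finset.mem_image_of_mem _ hB), hw⟩
  push Not at hdia
  refine ⟨.box A, Finset.mem_union_right _ (Finset.mem_insert_self _ _), fun v hv => ?_⟩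
  obtain ⟨C, hC, hvC⟩ := h v
  rcases Finset.mem_insert.1 hC with rfl | hC
  · exact hvC
  · exact absurd ⟨v, hv, hvC⟩ (hdia C hC)

lemma Models.clo (h : M.Models S (insert (A.subst (.mu A)) Γ)) :
    M.Models S (insert (.mu A) Γ) := by
  simpa [Models, M.eval_subst, M.eval_eval_mu] using h

lemma Models.ind (hB : B.ClosedF) (h : M.Models S (insert (A.subst B).compl {B})) :
    M.Models S (insert (Form.mu A).compl {B}) := by
  have hmuB : M.eval (.mu A) S ⊆ M.eval B S := (M.evalHom A).lfp_le fun w hw => by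
    simpa [M.eval_compl, M.eval_subst, M.eval_of_closedF hB Sᶜ S,
      show w ∈ M.eval A (M.eval B S) from hw] using h w
  intro w
  by_cases hw : w ∈ M.eval B S
  · exact ⟨B, by simp, hw⟩
  · exact ⟨(Form.mu A).compl, by simp, by rw [M.eval_compl]; exact fun hmu => hw (hmuB hmu)⟩

lemma Models.cut (hA : A.ClosedF) (h₁ : M.Models S (insert A Γ))
    (h₂ : M.Models S (insert A.compl Γ)) : M.Models S Γ := fun w => by
  have := h₁ w
  have := h₂ w
  simp_all [M.eval_compl, M.eval_of_closedF hA Sᶜ S]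
  tauto

end KripkeModel

theorem MDer.models {Γ : Sequent} (hd : MDer Γ) (hΓ : ClosedSeq Γ) (M : KripkeModel)
    (S : Set M.W) : M.Models S Γ := by
  induction hd with
  | ax Γ i => exact KripkeModel.models_ax i
  | axMu Γ A => exact KripkeModel.models_axMu
  | orR Γ A B _ ih => exact (ih (by simp_all [ClosedSeq, Form.ClosedF])).orR
  | andR Γ A B _ _ ih₁ ih₂ =>
    exact (ih₁ (by simp_all [ClosedSeq, Form.ClosedF])).andR
      (ih₂ (by simp_all [ClosedSeq, Form.ClosedF]))
  | boxR Γ Θ A _ ih =>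
    simp only [ClosedSeq, Finset.forall_mem_union, Finset.forall_mem_image,
      Finset.forall_mem_insert, Form.ClosedF] at hΓ
    exact (ih (Finset.forall_mem_insert _ _ _ |>.2 ⟨hΓ.2.1, hΓ.1⟩)).boxR
  | clo Γ A _ ih => exact (ih (by simp_all [ClosedSeq, Form.closedF_subst])).clo
  | ind A B _ ih =>
    have hB : B.ClosedF := hΓ B (by simp)
    exact (ih (by simp [ClosedSeq, hB, Form.closedF_compl, Form.closedF_subst])).ind hB
  | cut Γ A _ hA _ _ ih₁ ih₂ =>
    exact .cut hA (ih₁ (by simp_all [ClosedSeq]))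
      (ih₂ (by simp_all [ClosedSeq, Form.closedF_compl]))

def World : Type := {Δ : Sequent // Saturated Δ ∧ ¬KDer Δ}

/-- A world is read as the sequent it refutes: an atom is true at `w` unless `w` lists it. -/
def canonical : KripkeModel where
  W := World
  R w v := ∀ B, Form.dia B ∈ w.1 → B ∈ v.1
  V i := {w | Form.atom i ∉ w.1}

def avoiding (D : Form) : Set World := {w | D ∉ w.1}

namespace World

variable (w : World)

lemma resolved {C : Form} (hC : C ∈ w.1) : Resolved w.1 C := w.2.1 C hC

lemma atom_notMem_of_natom_mem {i : ℕ} (h : Form.natom i ∈ w.1) : Form.atom i ∉ w.1 :=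
  fun ha => w.2.2 (by simpa [Finset.insert_eq_of_mem, h, ha] using KDer.ax w.1 i)

lemma exists_rel_of_box_mem {A : Form} (hA : Form.box A ∈ w.1) :
    ∃ v : World, canonical.R w v ∧ A ∈ v.1 := by
  classical
  set Θ := w.1.preimage Form.dia fun _ _ _ _ h => Form.dia.inj h
  have hnd : ¬KDer (insert A Θ) := fun h => w.2.2 (by
    convert KDer.boxR Θ w.1 A h using 1
    rw [Finset.insert_eq_of_mem hA, eq_comm, Finset.union_eq_right]
    intro B hB
    obtain ⟨C, hC, rfl⟩ := Finset.mem_image.1 hB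
    exact Finset.mem_preimage.1 hC)
  obtain ⟨Δ, hΔ, hsat, hndΔ⟩ := exists_saturated_superset hnd
  exact ⟨⟨Δ, hsat, hndΔ⟩, fun B hB => hΔ (Finset.mem_insert_of_mem (Finset.mem_preimage.2 hB)),
    hΔ (Finset.mem_insert_self _ _)⟩

end World

lemma avoiding_top : avoiding Form.top = Set.univ :=
  Set.eq_univ_of_forall fun w htop => by
    obtain ⟨ha, hna⟩ : Form.atom 0 ∈ w.1 ∧ Form.natom 0 ∈ w.1 := w.resolved htop
    exact w.atom_notMem_of_natom_mem hna ha

/-- The truth lemma, generalised over the substituted formula so that the `μ` case can apply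
the induction hypothesis with `D := μX.A`, and the `ν` case with `D := A^i(⊤)`. -/
theorem canonical_eval_subset_avoiding {C : Form} (hC : C.IsL0) {D : Form} {S : Set World}
    (hS : S ⊆ avoiding D) : canonical.eval C S ⊆ avoiding (C.subst D) := by
  induction C generalizing D S with
  | atom i => exact fun w hw => hw
  | natom i => exact fun w hw hmem => hw (w.atom_notMem_of_natom_mem hmem)
  | var => exact hS
  | and A B ihA ihB =>
    rintro w ⟨hwA, hwB⟩ hmem
    rcases w.resolved hmem with h | h
    exacts [ihA hC.1 hS hwA h, ihB hC.2 hS hwB h]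
  | or A B ihA ihB =>
    rintro w (hw | hw) hmem
    exacts [ihA hC.1 hS hw (w.resolved hmem).1, ihB hC.2 hS hw (w.resolved hmem).2]
  | box A ih =>
    intro w hw hmem
    obtain ⟨v, hwv, hv⟩ := w.exists_rel_of_box_mem hmem
    exact ih hC hS (hw v hwv) hv
  | dia A ih =>
    rintro w ⟨v, hwv, hv⟩ hmem
    exact ih hC hS hv (hwv _ hmem)
  | mu A ih =>
    refine (canonical.evalHom A).lfp_le fun w hw hmem => ?_
    exact ih hC subset_rfl hw (w.resolved hmem)
  | nu A ih =>
    have hiter : ∀ i, canonical.eval (A.iter i) ∅ ⊆ avoiding (A.iter i) := by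
      intro i
      induction i with
      | zero => rw [Form.iter, avoiding_top]; exact Set.subset_univ _
      | succ i ihi => rw [Form.iter, canonical.eval_subst]; exact ih hC ihi
    intro w hw hmem
    obtain ⟨i, hi⟩ := w.resolved hmem
    exact hiter i (canonical.eval_nu_subset_iter A S ∅ i hw) hi
  | nut A => exact absurd hC id

theorem exists_world_refuting {Γ : Sequent} (hΓ : L0Seq Γ) (hnd : ¬KDer Γ) :
    ∃ w : World, ∀ C ∈ Γ, w ∉ canonical.eval C ∅ := by
  obtain ⟨Δ, hΓΔ, hsat, hndΔ⟩ := exists_saturated_superset hnd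
  refine ⟨⟨Δ, hsat, hndΔ⟩, fun C hC hw => ?_⟩
  have := canonical_eval_subset_avoiding (hΓ C hC).1 (Set.empty_subset (avoiding C)) hw
  rw [Form.subst_of_closedF (hΓ C hC).2] at this
  exact this (hΓΔ hC)

/-- Main theorem: every `L0` sequent derivable in the finitary
system `M` is derivable in the cut-free infinitary system `K_ω`. -/
theorem stmt11 (Γ : Sequent) (hΓ : L0Seq Γ)
    (hd : MDer Γ) : KDer Γ := by
  by_contra hnd
  obtain ⟨w, hw⟩ := exists_world_refuting hΓ hnd
  obtain ⟨C, hC, hwC⟩ := hd.models (fun C hC => (hΓ C hC).2) canonical ∅ w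
  exact hw C hC hwC

end OneVarMu
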